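/- arXiv:1806.09588 — 3 statements merged into one kernel-verified Lean document; each statement's English description precedes it below -/
import Mathlib

section
/- Define the reconstruction threshold $\lambda_c = \sup\{\lambda > 0 : q^*(\lambda) = 0\}$, where $q^*(\lambda)$ denotes a maximizer of $q \mapsto F(\lambda,q) = \psi(\lambda q) - \lambda q^2/4$ over $q \ge 0$ (when unique). If $P$ is centered with bounded support, then $\lambda_c \cdot (\mathbb{E}_P[X^2])^2 \le 1$. -/
/-!
Put `y = √r x* + z`. Completing the square in `x` turns the inner partition function into
`exp (y²/2) √(2π) ρ(y)`, where `ρ` is the Lebesgue density of the law of `Y = √r X* + Z`.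
Hence `ψ(r) = (1 + r m)/2 + log (2π)/2 - h(Y)` with `m = E X²` and `h` the differential
entropy. Among laws with second moment `1 + r m` the centered Gaussian has the largest entropy
(Gibbs' inequality `log t ≤ t - 1` applied to the ratio of the two densities), so
`ψ(r) ≥ (r m - log (1 + r m))/2 = r²m²/4 + O(r³)`.
If `λ m² > 1`, then `F(λ, q) = ψ(λ q) - λ q²/4 > 0 = F(λ, 0)` for small `q > 0`, so `0` is not
a maximizer of `F(λ, ·)`; thus every `λ` with `q*(λ) = 0` satisfies `λ m² ≤ 1`.
-/

open MeasureTheory ProbabilityTheory Real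

noncomputable section

lemma gaussianPDFReal_le_inv_sqrt (μ : ℝ) (v : NNReal) (x : ℝ) :
    gaussianPDFReal μ v x ≤ (√(2 * π * v))⁻¹ := by
  rw [gaussianPDFReal_def]
  refine mul_le_of_le_one_right (by positivity) (exp_le_one_iff.2 ?_)
  exact div_nonpos_of_nonpos_of_nonneg (neg_nonpos.2 (sq_nonneg _)) (by positivity)

lemma log_gaussianPDFReal (μ : ℝ) {v : NNReal} (hv : v ≠ 0) (x : ℝ) :
    log (gaussianPDFReal μ v x) = -log (2 * π * v) / 2 - (x - μ) ^ 2 / (2 * v) := by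
  have hv' : (0 : ℝ) < v := by positivity
  rw [gaussianPDFReal_def, log_mul (by positivity) (exp_pos _).ne', log_inv, log_exp,
    log_sqrt (by positivity)]
  ring

lemma integral_sq_gaussianReal (μ : ℝ) (v : NNReal) :
    ∫ x, x ^ 2 ∂gaussianReal μ v = μ ^ 2 + v := by
  have h := variance_eq_sub (memLp_id_gaussianReal (μ := μ) (v := v) 2)
  rw [variance_id_gaussianReal] at h
  simp only [Pi.pow_apply, id_eq, integral_id_gaussianReal] at h
  linarith

lemma integral_const_add_sq_gaussianReal (c : ℝ) :
    ∫ z, (c + z) ^ 2 ∂gaussianReal 0 1 = c ^ 2 + 1 := by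
  rw [← integral_map (f := fun y => y ^ 2) (by fun_prop) (by fun_prop),
    gaussianReal_map_const_add, integral_sq_gaussianReal]
  simp

lemma integrable_const_add_sq_gaussianReal (c : ℝ) :
    Integrable (fun z => (c + z) ^ 2) (gaussianReal 0 1) :=
  ((memLp_const c).add (memLp_id_gaussianReal 2)).integrable_sq

lemma integral_log_le_integral_log_density {α : Type*} [MeasurableSpace α] {μ ν : Measure α}
    [IsProbabilityMeasure ν] {ρ g : α → ℝ} (hρm : Measurable ρ) (hρ : ∀ x, 0 < ρ x)
    (hν : ν = μ.withDensity (fun x => ENNReal.ofReal (ρ x)))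
    (hg : ∀ x, 0 < g x) (hgi : Integrable g μ) (hg1 : ∫ x, g x ∂μ = 1)
    (hlogg : Integrable (fun x => log (g x)) ν) (hlogρ : Integrable (fun x => log (ρ x)) ν) :
    ∫ x, log (g x) ∂ν ≤ ∫ x, log (ρ x) ∂ν := by
  have hρ' : Measurable fun x => ENNReal.ofReal (ρ x) := hρm.ennreal_ofReal
  have hfin : ∀ᵐ x ∂μ, ENNReal.ofReal (ρ x) < ⊤ := ae_of_all _ fun _ => ENNReal.ofReal_lt_top
  have hcancel (x : α) : g x / ρ x * (ENNReal.ofReal (ρ x)).toReal = g x := by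
    rw [ENNReal.toReal_ofReal (hρ x).le, div_mul_cancel₀ _ (hρ x).ne']
  have hratio : Integrable (fun x => g x / ρ x) ν := by
    rw [hν, integrable_withDensity_iff hρ' hfin]
    simpa only [hcancel] using hgi
  have hratio_integral : ∫ x, g x / ρ x ∂ν = 1 := by
    rw [hν, integral_withDensity_eq_integral_toReal_smul hρ' hfin]
    simp_rw [smul_eq_mul, mul_comm (ENNReal.ofReal _).toReal, hcancel]
    exact hg1
  have hgibbs : ∫ x, (log (g x) - log (ρ x)) ∂ν ≤ ∫ x, (g x / ρ x - 1) ∂ν := by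
    refine integral_mono (hlogg.sub hlogρ) (hratio.sub (integrable_const 1)) fun x => ?_
    rw [← log_div (hg x).ne' (hρ x).ne']
    exact log_le_sub_one_of_pos (div_pos (hg x) (hρ x))
  rw [integral_sub hlogg hlogρ, integral_sub hratio (integrable_const 1), hratio_integral,
    integral_const, probReal_univ, one_smul, sub_self, sub_nonpos] at hgibbs
  exact hgibbs

lemma exists_pos_mul_sq_lt_sub_log {c : ℝ} (hc : c < 1) :
    ∃ u > 0, c * u ^ 2 / 2 < u - log (1 + u) := by
  set u := min (1 / 2) ((1 - c) / 8)
  have hu0 : 0 < u := lt_min (by norm_num) (by linarith)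
  have hu1 : u ≤ 1 / 2 := min_le_left _ _
  have hu2 : u ≤ (1 - c) / 8 := min_le_right _ _
  refine ⟨u, hu0, ?_⟩
  have htaylor := abs_log_sub_add_sum_range_le (x := -u)
    (by rw [abs_neg, abs_of_pos hu0]; linarith) 2
  norm_num [Finset.sum_range_succ, abs_of_pos hu0] at htaylor
  have hcube : u ^ 3 / (1 - u) ≤ 2 * u ^ 3 := by
    rw [div_le_iff₀ (by linarith)]
    nlinarith [pow_pos hu0 3]
  have hlog_upper := (abs_le.1 htaylor).2
  nlinarith [pow_pos hu0 2]

def channelLaw (P : Measure ℝ) (s : ℝ) : Measure ℝ :=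
  (P.prod (gaussianReal 0 1)).map (fun p => s * p.1 + p.2)

def channelDensity (P : Measure ℝ) (s y : ℝ) : ℝ :=
  ∫ x, gaussianPDFReal (s * x) 1 y ∂P

variable {P : Measure ℝ}

instance {s : ℝ} [IsProbabilityMeasure P] : IsProbabilityMeasure (channelLaw P s) :=
  Measure.isProbabilityMeasure_map (by fun_prop)

lemma measurable_gaussianPDFReal_mul_mean (s y : ℝ) :
    Measurable (fun x => gaussianPDFReal (s * x) 1 y) :=
  measurable_uncurry_gaussianPDFReal.comp
    (by fun_prop : Measurable fun x => (s * x, (1 : NNReal), y))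

lemma integrable_gaussianPDFReal_mul_mean [IsFiniteMeasure P] (s y : ℝ) :
    Integrable (fun x => gaussianPDFReal (s * x) 1 y) P :=
  Integrable.of_bound (measurable_gaussianPDFReal_mul_mean s y).aestronglyMeasurable
    (√(2 * π * (1 : NNReal)))⁻¹ <| ae_of_all _ fun x => by
    rw [norm_of_nonneg (gaussianPDFReal_nonneg _ _ _)]
    exact gaussianPDFReal_le_inv_sqrt _ _ _

lemma measurable_channelDensity (P : Measure ℝ) [SFinite P] (s : ℝ) :
    Measurable (channelDensity P s) :=
  (stronglyMeasurable_uncurry_gaussianPDFReal.comp_measurable (by fun_prop :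
    Measurable fun p : ℝ × ℝ => (s * p.2, (1 : NNReal), p.1))).integral_prod_right'.measurable

lemma channelDensity_pos [IsProbabilityMeasure P] (s y : ℝ) : 0 < channelDensity P s y := by
  refine (integral_pos_iff_support_of_nonneg (fun x => gaussianPDFReal_nonneg _ _ _)
    (integrable_gaussianPDFReal_mul_mean s y)).2 ?_
  rw [Function.support_eq_univ fun x => (gaussianPDFReal_pos _ _ _ one_ne_zero).ne']
  simp

lemma channelDensity_le [IsProbabilityMeasure P] (s y : ℝ) :
    channelDensity P s y ≤ (√(2 * π))⁻¹ := by
  simpa [channelDensity] using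
    integral_mono (integrable_gaussianPDFReal_mul_mean (P := P) s y) (integrable_const _)
    fun x => gaussianPDFReal_le_inv_sqrt (s * x) 1 y

lemma channelDensity_ge [IsProbabilityMeasure P] {K : ℝ} (hK : ∀ᵐ x ∂P, |x| ≤ K) (s y : ℝ) :
    (√(2 * π))⁻¹ * exp (-(|y| + |s| * K) ^ 2 / 2) ≤ channelDensity P s y := by
  have h := integral_mono_ae
    (integrable_const (μ := P) ((√(2 * π))⁻¹ * exp (-(|y| + |s| * K) ^ 2 / 2)))
    (integrable_gaussianPDFReal_mul_mean s y) ?_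
  · simpa [channelDensity] using h
  filter_upwards [hK] with x hx
  have hdist : |y - s * x| ≤ |y| + |s| * K := (abs_sub _ _).trans (by rw [abs_mul]; gcongr)
  have hsq : (y - s * x) ^ 2 ≤ (|y| + |s| * K) ^ 2 := by
    rw [← sq_abs]; exact pow_le_pow_left₀ (abs_nonneg _) hdist 2
  simp only [gaussianPDFReal_def, NNReal.coe_one, mul_one]
  gcongr

lemma channelLaw_eq_withDensity [IsFiniteMeasure P] (s : ℝ) :
    channelLaw P s = volume.withDensity (fun y => ENNReal.ofReal (channelDensity P s y)) := by
  ext A hA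
  have hY : Measurable fun p : ℝ × ℝ => s * p.1 + p.2 := by fun_prop
  have hslice (x : ℝ) :
      gaussianReal 0 1 (Prod.mk x ⁻¹' ((fun p : ℝ × ℝ => s * p.1 + p.2) ⁻¹' A))
        = ∫⁻ y in A, ENNReal.ofReal (gaussianPDFReal (s * x) 1 y) := by
    have hshift := gaussianReal_map_const_add (μ := 0) (v := 1) (s * x)
    rw [zero_add] at hshift
    change _ = ∫⁻ y in A, gaussianPDF (s * x) 1 y
    rw [← gaussianReal_apply _ one_ne_zero, ← hshift, Measure.map_apply (by fun_prop) hA]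
    rfl
  have hfiber (y : ℝ) : ∫⁻ x, ENNReal.ofReal (gaussianPDFReal (s * x) 1 y) ∂P
      = ENNReal.ofReal (channelDensity P s y) :=
    (ofReal_integral_eq_lintegral_ofReal (integrable_gaussianPDFReal_mul_mean s y)
      (ae_of_all _ fun _ => gaussianPDFReal_nonneg _ _ _)).symm
  rw [channelLaw, Measure.map_apply hY hA, Measure.prod_apply (hY hA), withDensity_apply _ hA]
  simp_rw [hslice, ← hfiber]
  exact lintegral_lintegral_swap <| Measurable.aemeasurable <| Measurable.ennreal_ofReal <|
    measurable_uncurry_gaussianPDFReal.comp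
      (by fun_prop : Measurable fun p : ℝ × ℝ => (s * p.1, (1 : NNReal), p.2))

lemma integrable_sq_of_ae_abs_le [IsFiniteMeasure P] {K : ℝ} (hK : ∀ᵐ x ∂P, |x| ≤ K) :
    Integrable (fun x => x ^ 2) P :=
  Integrable.of_bound (by fun_prop) (K ^ 2) <| hK.mono fun x hx => by
    rw [norm_pow, norm_eq_abs]; exact pow_le_pow_left₀ (abs_nonneg x) hx 2

variable [IsProbabilityMeasure P]

lemma integrable_sq_channelLaw (hP : Integrable (fun x => x ^ 2) P) (s : ℝ) :
    Integrable (fun y => y ^ 2) (channelLaw P s) := by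
  refine (integrable_map_measure (by fun_prop) (by fun_prop)).2 ?_
  refine (integrable_prod_iff (by fun_prop)).2
    ⟨ae_of_all _ fun x => integrable_const_add_sq_gaussianReal (s * x), ?_⟩
  simp only [Function.comp_apply, norm_pow, Real.norm_eq_abs, sq_abs,
    integral_const_add_sq_gaussianReal, mul_pow]
  exact (hP.const_mul _).add (integrable_const _)

lemma integral_sq_channelLaw (hP : Integrable (fun x => x ^ 2) P) (s : ℝ) :
    ∫ y, y ^ 2 ∂channelLaw P s = s ^ 2 * ∫ x, x ^ 2 ∂P + 1 := by
  have hmap : Integrable (fun p : ℝ × ℝ => (s * p.1 + p.2) ^ 2) (P.prod (gaussianReal 0 1)) :=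
    (integrable_map_measure (by fun_prop) (by fun_prop)).1 (integrable_sq_channelLaw hP s)
  rw [channelLaw, integral_map (by fun_prop) (by fun_prop), integral_prod _ hmap]
  simp only [integral_const_add_sq_gaussianReal, mul_pow]
  rw [integral_add (hP.const_mul _) (integrable_const _), integral_const_mul]
  simp

lemma integrable_channelLaw_of_abs_le (hP : Integrable (fun x => x ^ 2) P) {s : ℝ}
    {f : ℝ → ℝ} (hf : AEStronglyMeasurable f (channelLaw P s)) (a b : ℝ)
    (hfab : ∀ y, |f y| ≤ a * y ^ 2 + b) :
    Integrable f (channelLaw P s) :=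
  Integrable.mono' (((integrable_sq_channelLaw hP s).const_mul a).add (integrable_const b)) hf
    (ae_of_all _ hfab)

lemma abs_log_channelDensity_le {K : ℝ} (hK : ∀ᵐ x ∂P, |x| ≤ K) (s y : ℝ) :
    |log (channelDensity P s y)| ≤ y ^ 2 + ((s * K) ^ 2 + log (2 * π) / 2) := by
  have hpos := channelDensity_pos (P := P) s y
  have hlog2π : 0 ≤ log (2 * π) := log_nonneg (by linarith [pi_gt_three])
  have hupper : log (channelDensity P s y) ≤ -(log (2 * π) / 2) := by
    have h := log_le_log hpos (channelDensity_le s y)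
    rwa [log_inv, log_sqrt (by positivity)] at h
  have hlower : -(log (2 * π) / 2) - (|y| + |s| * K) ^ 2 / 2 ≤ log (channelDensity P s y) := by
    have h := log_le_log (by positivity) (channelDensity_ge hK s y)
    rw [log_mul (by positivity) (exp_pos _).ne', log_inv, log_sqrt (by positivity), log_exp] at h
    linarith
  have hsq : (|y| + |s| * K) ^ 2 ≤ 2 * y ^ 2 + 2 * (s * K) ^ 2 := by
    have habs : (|s| * K) ^ 2 = (s * K) ^ 2 := by rw [mul_pow, sq_abs, mul_pow]
    nlinarith [sq_nonneg (|y| - |s| * K), sq_abs y]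
  rw [abs_le]
  constructor <;> nlinarith

lemma integrable_log_channelDensity {K : ℝ} (hK : ∀ᵐ x ∂P, |x| ≤ K) (s : ℝ) :
    Integrable (fun y => log (channelDensity P s y)) (channelLaw P s) :=
  integrable_channelLaw_of_abs_le (integrable_sq_of_ae_abs_le hK)
    (measurable_channelDensity P s).log.aestronglyMeasurable 1 _
    fun y => by simpa using abs_log_channelDensity_le hK s y

/-- Completing the square in `x`, with `y = s xs + z`. -/
lemma log_integral_exp_eq (s xs z : ℝ) :
    log (∫ x, exp (s * z * x + s ^ 2 * x * xs - s ^ 2 / 2 * x ^ 2) ∂P)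
      = (s * xs + z) ^ 2 / 2 + log (2 * π) / 2 + log (channelDensity P s (s * xs + z)) := by
  have hexp (x : ℝ) : exp (s * z * x + s ^ 2 * x * xs - s ^ 2 / 2 * x ^ 2)
      = exp ((s * xs + z) ^ 2 / 2) * √(2 * π) * gaussianPDFReal (s * x) 1 (s * xs + z) := by
    have hc : √(2 * π) ≠ 0 := by positivity
    rw [gaussianPDFReal_def, NNReal.coe_one, mul_one]
    field_simp
    rw [← exp_add]
    ring_nf
  simp_rw [hexp]
  rw [integral_const_mul]
  change log (_ * channelDensity P s (s * xs + z)) = _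
  rw [log_mul (by positivity) (channelDensity_pos s _).ne',
    log_mul (by positivity) (by positivity), log_exp, log_sqrt (by positivity)]

/-- The function `ψ` of the statement. -/
def freeEntropy (P : Measure ℝ) (r : ℝ) : ℝ :=
  ∫ xs, ∫ z, log (∫ x, exp (√r * z * x + r * x * xs - r / 2 * x ^ 2) ∂P) ∂gaussianReal 0 1 ∂P

lemma freeEntropy_zero : freeEntropy P 0 = 0 := by
  simp [freeEntropy]

/-- The last integral is minus the differential entropy of `channelLaw P √r`. -/
lemma freeEntropy_eq {K : ℝ} (hK : ∀ᵐ x ∂P, |x| ≤ K) {r : ℝ} (hr : 0 ≤ r) :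
    freeEntropy P r = (r * ∫ x, x ^ 2 ∂P + 1) / 2 + log (2 * π) / 2
      + ∫ y, log (channelDensity P (√r) y) ∂channelLaw P (√r) := by
  obtain ⟨s, hs, rfl⟩ : ∃ s, 0 ≤ s ∧ r = s ^ 2 := ⟨√r, sqrt_nonneg r, (sq_sqrt hr).symm⟩
  rw [sqrt_sq hs]
  have hP := integrable_sq_of_ae_abs_le hK
  have hsq := integrable_sq_channelLaw hP s
  have hlogρ := integrable_log_channelDensity hK s
  have hquad : Integrable (fun y => y ^ 2 / 2 + log (2 * π) / 2) (channelLaw P s) :=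
    (hsq.div_const 2).add (integrable_const _)
  have hH : Integrable (fun y => y ^ 2 / 2 + log (2 * π) / 2 + log (channelDensity P s y))
      (channelLaw P s) := hquad.add hlogρ
  have hHY := (integrable_map_measure hH.aestronglyMeasurable (by fun_prop)).1 hH
  calc freeEntropy P (s ^ 2)
      = ∫ xs, ∫ z, ((s * xs + z) ^ 2 / 2 + log (2 * π) / 2
          + log (channelDensity P s (s * xs + z))) ∂gaussianReal 0 1 ∂P := by
        simp only [freeEntropy, sqrt_sq hs, log_integral_exp_eq]
    _ = ∫ y, (y ^ 2 / 2 + log (2 * π) / 2 + log (channelDensity P s y)) ∂channelLaw P s := by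
        rw [channelLaw, integral_map (by fun_prop) hH.aestronglyMeasurable]
        exact (integral_prod _ hHY).symm
    _ = _ := by
        rw [integral_add hquad hlogρ, integral_add (hsq.div_const 2) (integrable_const _),
          integral_div, integral_sq_channelLaw hP s, integral_const]
        simp

lemma freeEntropy_ge {K : ℝ} (hK : ∀ᵐ x ∂P, |x| ≤ K) {r : ℝ} (hr : 0 ≤ r) :
    r * (∫ x, x ^ 2 ∂P) / 2 - log (1 + r * ∫ x, x ^ 2 ∂P) / 2 ≤ freeEntropy P r := by
  set m := ∫ x, x ^ 2 ∂P with hm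
  have hP := integrable_sq_of_ae_abs_le hK
  have hσpos : 0 < 1 + r * m := by positivity
  -- the variance of the centered Gaussian with the same second moment as `channelLaw P √r`
  set σ : NNReal := ⟨1 + r * m, hσpos.le⟩
  have hσ : σ ≠ 0 := ne_of_gt hσpos
  have hlog_gaussian (y : ℝ) : log (gaussianPDFReal 0 σ y)
      = -log (2 * π * (1 + r * m)) / 2 - y ^ 2 / (2 * (1 + r * m)) := by
    rw [log_gaussianPDFReal 0 hσ, sub_zero]
    rfl
  have hsq := integrable_sq_channelLaw hP √r
  have hlogg : Integrable (fun y => log (gaussianPDFReal 0 σ y)) (channelLaw P √r) := by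
    simp_rw [hlog_gaussian]
    exact (integrable_const _).sub (hsq.div_const _)
  have hgibbs := integral_log_le_integral_log_density (measurable_channelDensity P √r)
    (channelDensity_pos √r) (channelLaw_eq_withDensity √r)
    (fun y => gaussianPDFReal_pos _ _ _ hσ) (integrable_gaussianPDFReal 0 σ)
    (integral_gaussianPDFReal_eq_one 0 hσ) hlogg (integrable_log_channelDensity hK √r)
  have hcross : ∫ y, log (gaussianPDFReal 0 σ y) ∂channelLaw P √r
      = -log (2 * π * (1 + r * m)) / 2 - 1 / 2 := by
    simp_rw [hlog_gaussian]
    rw [integral_sub (integrable_const _) (hsq.div_const _), integral_const, probReal_univ,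
      one_smul, integral_div, integral_sq_channelLaw hP, sq_sqrt hr, ← hm]
    field_simp
    ring
  rw [log_mul (by positivity) hσpos.ne'] at hcross
  rw [freeEntropy_eq hK hr, ← hm]
  linarith

lemma exists_lt_freeEntropy {K : ℝ} (hK : ∀ᵐ x ∂P, |x| ≤ K) {lam : ℝ} (hlam : 0 < lam)
    (h : 1 < lam * (∫ x, x ^ 2 ∂P) ^ 2) :
    ∃ q > 0, lam * q ^ 2 / 4 < freeEntropy P (lam * q) := by
  set m := ∫ x, x ^ 2 ∂P with hm
  have hmpos : 0 < m := by
    by_contra! hm0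
    have hm_zero : m = 0 := le_antisymm hm0 (integral_nonneg fun x => sq_nonneg x)
    norm_num [hm_zero] at h
  obtain ⟨u, hu, hlt⟩ := exists_pos_mul_sq_lt_sub_log (c := 1 / (lam * m ^ 2))
    ((div_lt_one (by positivity)).2 h)
  refine ⟨u / (lam * m), by positivity, ?_⟩
  have hr : lam * (u / (lam * m)) = u / m := by field_simp
  have hge := freeEntropy_ge hK (r := u / m) (by positivity)
  rw [← hm, div_mul_cancel₀ _ hmpos.ne'] at hge
  calc lam * (u / (lam * m)) ^ 2 / 4 = 1 / (lam * m ^ 2) * u ^ 2 / 2 / 2 := by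
        field_simp; ring
    _ < (u - log (1 + u)) / 2 := by linarith
    _ ≤ freeEntropy P (lam * (u / (lam * m))) := by rw [hr]; linarith

end

theorem stmt2_general (P : Measure ℝ) [IsProbabilityMeasure P]
    (K : ℝ) (hK : ∀ᵐ x ∂P, |x| ≤ K)
    (ψ : ℝ → ℝ)
    (hψ : ∀ r : ℝ, ψ r =
      ∫ xs, ∫ z, Real.log (∫ x,
          Real.exp (Real.sqrt r * z * x + r * x * xs - r / 2 * x ^ 2) ∂P)
        ∂(gaussianReal 0 1) ∂P)
    (F : ℝ → ℝ → ℝ)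
    (hF : ∀ lam q : ℝ, F lam q = ψ (lam * q) - lam * q ^ 2 / 4)
    (qstar : ℝ → ℝ)
    (hqstar : ∀ lam > (0 : ℝ), 0 ≤ qstar lam ∧ IsMaxOn (F lam) (Set.Ici 0) (qstar lam)) :
    sSup {lam : ℝ | 0 < lam ∧ qstar lam = 0} * (∫ x, x ^ 2 ∂P) ^ 2 ≤ 1 := by
  have hψ' : ψ = freeEntropy P := funext hψ
  have hbound : ∀ lam ∈ {lam : ℝ | 0 < lam ∧ qstar lam = 0},
      lam * (∫ x, x ^ 2 ∂P) ^ 2 ≤ 1 := by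
    rintro lam ⟨hlam, hq⟩
    by_contra! h
    obtain ⟨q, hq0, hlt⟩ := exists_lt_freeEntropy hK hlam h
    have hmax : F lam q ≤ F lam 0 := hq ▸ (hqstar lam hlam).2 (Set.mem_Ici.2 hq0.le)
    rw [hF, hF, hψ', mul_zero, freeEntropy_zero] at hmax
    linarith
  rcases (integral_nonneg fun x => sq_nonneg x : 0 ≤ ∫ x, x ^ 2 ∂P).eq_or_lt with hm | hm
  · simp [← hm]
  · have hsup := Real.sSup_le (fun lam hl => (le_div_iff₀ (by positivity)).2 (hbound lam hl))
      (by positivity : (0 : ℝ) ≤ 1 / (∫ x, x ^ 2 ∂P) ^ 2)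
    calc _ ≤ 1 / (∫ x, x ^ 2 ∂P) ^ 2 * (∫ x, x ^ 2 ∂P) ^ 2 :=
          mul_le_mul_of_nonneg_right hsup (by positivity)
      _ = 1 := by field_simp

theorem stmt2 (P : Measure ℝ) [IsProbabilityMeasure P]
    (K : ℝ) (hK : ∀ᵐ x ∂P, |x| ≤ K)
    (hcent : (∫ x, x ∂P) = 0)
    (ψ : ℝ → ℝ)
    (hψ : ∀ r : ℝ, ψ r =
      ∫ xs, ∫ z, Real.log (∫ x,
          Real.exp (Real.sqrt r * z * x + r * x * xs - r / 2 * x ^ 2) ∂P)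
        ∂(gaussianReal 0 1) ∂P)
    (F : ℝ → ℝ → ℝ)
    (hF : ∀ lam q : ℝ, F lam q = ψ (lam * q) - lam * q ^ 2 / 4)
    (qstar : ℝ → ℝ)
    (hqstar : ∀ lam > (0 : ℝ), 0 ≤ qstar lam ∧ IsMaxOn (F lam) (Set.Ici 0) (qstar lam))
    (huniq : ∀ lam > (0 : ℝ), ∀ q, 0 ≤ q → IsMaxOn (F lam) (Set.Ici 0) q → q = qstar lam) :
    sSup {lam : ℝ | 0 < lam ∧ qstar lam = 0} * (∫ x, x ^ 2 ∂P) ^ 2 ≤ 1 :=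
  stmt2_general P K hK ψ hψ F hF qstar hqstar
end

section
/- Let $P$ be a probability measure on $\mathbb{R}$, let $\mu$ be its symmetric part defined by $\mu(A) = (P(A) + P(-A))/2$, and for $r \ge 0$, $s \in \mathbb{R}$ define $\bar\psi(r,s) = \mathbb{E}_{x^*, z}\log \int \exp(\sqrt{r} z x + s x x^* - \tfrac{r}{2}x^2)\,dP(x)$ with $x^* \sim P$, $z \sim \mathcal{N}(0,1)$ independent. Then for all $r \ge 0$, $\bar\psi(r, -r) \le \bar\psi(r, r)$. -/
open MeasureTheory ProbabilityTheory

open scoped NNReal ENNReal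

lemma gauss_integral_eq (f : ℝ → ℝ) :
    ∫ z, f z ∂(gaussianReal 0 1) = ∫ z, gaussianPDFReal 0 1 z * f z := by
  rw [gaussianReal_of_var_ne_zero 0 one_ne_zero, gaussianPDF_def]
  have h : ∀ x : ℝ, ENNReal.ofReal (gaussianPDFReal 0 1 x)
      = ((Real.toNNReal (gaussianPDFReal 0 1 x) : ℝ≥0) : ℝ≥0∞) := fun _ => rfl
  simp_rw [h]
  rw [integral_withDensity_eq_integral_smul ((measurable_gaussianPDFReal 0 1).real_toNNReal) f]
  refine integral_congr_ae (Filter.Eventually.of_forall fun z => ?_)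
  simp [NNReal.smul_def, Real.coe_toNNReal _ (gaussianPDFReal_nonneg 0 1 z)]

lemma gauss_integrable_iff (f : ℝ → ℝ) :
    Integrable f (gaussianReal 0 1) ↔
      Integrable (fun z => gaussianPDFReal 0 1 z * f z) volume := by
  rw [gaussianReal_of_var_ne_zero 0 one_ne_zero, gaussianPDF_def]
  have h : ∀ x : ℝ, ENNReal.ofReal (gaussianPDFReal 0 1 x)
      = ((Real.toNNReal (gaussianPDFReal 0 1 x) : ℝ≥0) : ℝ≥0∞) := fun _ => rfl
  simp_rw [h]
  rw [integrable_withDensity_iff_integrable_smul ((measurable_gaussianPDFReal 0 1).real_toNNReal)]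
  constructor <;> intro hi <;> refine hi.congr (Filter.Eventually.of_forall fun z => ?_) <;>
    simp [NNReal.smul_def, Real.coe_toNNReal _ (gaussianPDFReal_nonneg 0 1 z)]

lemma pdf_translate (a z : ℝ) :
    gaussianPDFReal 0 1 (z - a) = gaussianPDFReal 0 1 z * Real.exp (a * z - a ^ 2 / 2) := by
  simp only [gaussianPDFReal, NNReal.coe_one, mul_one, sub_zero]
  rw [mul_assoc, ← Real.exp_add]
  congr 1
  ring

lemma pdf_even (z : ℝ) : gaussianPDFReal 0 1 (-z) = gaussianPDFReal 0 1 z := by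
  simp only [gaussianPDFReal, NNReal.coe_one, mul_one, sub_zero, neg_sq]

lemma gauss_sym (f : ℝ → ℝ) :
    ∫ z, f (-z) ∂(gaussianReal 0 1) = ∫ z, f z ∂(gaussianReal 0 1) := by
  rw [gauss_integral_eq, gauss_integral_eq,
    ← integral_neg_eq_self (fun z => gaussianPDFReal 0 1 z * f z) volume]
  refine integral_congr_ae (Filter.Eventually.of_forall fun z => ?_)
  show gaussianPDFReal 0 1 z * f (-z) = gaussianPDFReal 0 1 (-z) * f (-z)
  rw [pdf_even]

lemma gauss_tilt (f : ℝ → ℝ) (a : ℝ) :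
    ∫ z, f (z + a) ∂(gaussianReal 0 1)
      = ∫ z, f z * Real.exp (a * z - a ^ 2 / 2) ∂(gaussianReal 0 1) := by
  rw [gauss_integral_eq, gauss_integral_eq]
  have h := integral_add_right_eq_self (μ := volume)
    (fun z => gaussianPDFReal 0 1 (z - a) * f z) a
  simp only [add_sub_cancel_right] at h
  rw [h]
  refine integral_congr_ae (Filter.Eventually.of_forall fun z => ?_)
  show gaussianPDFReal 0 1 (z - a) * f z = gaussianPDFReal 0 1 z * (f z * Real.exp (a * z - a ^ 2 / 2))
  rw [pdf_translate]
  ring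

lemma gauss_integrable_bound (a b d : ℝ) :
    Integrable (fun z => (a * (abs z) + b) * Real.exp (d * (abs z))) (gaussianReal 0 1) := by
  rw [gauss_integrable_iff]
  have hsq : (1 : ℝ) ≤ Real.sqrt (2 * Real.pi) := by
    nlinarith [Real.sq_sqrt (by positivity : (0:ℝ) ≤ 2 * Real.pi),
      Real.sqrt_nonneg (2 * Real.pi), Real.pi_gt_three]
  refine Integrable.mono'
    (g := fun z => ((abs a) + (abs b)) * Real.exp (((abs d) + 1) ^ 2) * Real.exp (-(1/4) * z ^ 2))
    (((integrable_exp_neg_mul_sq (by norm_num : (0:ℝ) < 1/4)).const_mul _)) ?_ ?_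
  · exact ((measurable_gaussianPDFReal 0 1).mul (by fun_prop)).aestronglyMeasurable
  · refine Filter.Eventually.of_forall fun z => ?_
    have ht : (0:ℝ) ≤ (abs z) := abs_nonneg z
    have hexp1 : Real.exp (d * (abs z)) ≤ Real.exp ((abs d) * (abs z)) :=
      Real.exp_le_exp.2 (mul_le_mul_of_nonneg_right (le_abs_self d) ht)
    have h3 : |a * (abs z) + b| ≤ (abs a) * (abs z) + (abs b) := by
      calc |a * (abs z) + b| ≤ |a * (abs z)| + (abs b) := abs_add_le _ _
        _ = (abs a) * (abs z) + (abs b) := by rw [abs_mul, abs_abs]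
    have h4 : (abs a) * (abs z) + (abs b) ≤ ((abs a) + (abs b)) * Real.exp (abs z) := by
      nlinarith [Real.add_one_le_exp (abs z), abs_nonneg a, abs_nonneg b]
    have hQ : |(a * (abs z) + b) * Real.exp (d * (abs z))|
        ≤ ((abs a) + (abs b)) * Real.exp (((abs d) + 1) * (abs z)) := by
      rw [abs_mul, Real.abs_exp]
      have e : ((abs a) + (abs b)) * Real.exp (((abs d) + 1) * (abs z))
          = (((abs a) + (abs b)) * Real.exp (abs z)) * Real.exp ((abs d) * (abs z)) := by
        rw [mul_assoc, ← Real.exp_add]; ring_nf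
      rw [e]
      exact mul_le_mul (h3.trans h4) hexp1 (Real.exp_pos _).le (by positivity)
    have hpdf : gaussianPDFReal 0 1 z ≤ Real.exp (-(z ^ 2) / 2) := by
      simp only [gaussianPDFReal, NNReal.coe_one, mul_one, sub_zero]
      nlinarith [inv_le_one_of_one_le₀ hsq, Real.exp_nonneg (-(z ^ 2) / 2)]
    have hpdfnn : 0 ≤ gaussianPDFReal 0 1 z := gaussianPDFReal_nonneg 0 1 z
    have hexp5 : Real.exp (-(z ^ 2) / 2) * Real.exp (((abs d) + 1) * (abs z))
        ≤ Real.exp (((abs d) + 1) ^ 2) * Real.exp (-(1/4) * z ^ 2) := by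
      rw [← Real.exp_add, ← Real.exp_add]
      refine Real.exp_le_exp.2 ?_
      nlinarith [sq_nonneg ((abs z) / 2 - ((abs d) + 1)), sq_abs z]
    show ‖gaussianPDFReal 0 1 z * ((a * (abs z) + b) * Real.exp (d * (abs z)))‖
        ≤ ((abs a) + (abs b)) * Real.exp (((abs d) + 1) ^ 2) * Real.exp (-(1/4) * z ^ 2)
    rw [norm_mul, Real.norm_eq_abs, Real.norm_eq_abs, abs_of_nonneg hpdfnn]
    calc gaussianPDFReal 0 1 z * |(a * (abs z) + b) * Real.exp (d * (abs z))|
        ≤ Real.exp (-(z ^ 2) / 2) * (((abs a) + (abs b)) * Real.exp (((abs d) + 1) * (abs z))) :=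
          mul_le_mul hpdf hQ (abs_nonneg _) (Real.exp_nonneg _)
      _ = ((abs a) + (abs b)) * (Real.exp (-(z ^ 2) / 2) * Real.exp (((abs d) + 1) * (abs z))) := by ring
      _ ≤ ((abs a) + (abs b)) * (Real.exp (((abs d) + 1) ^ 2) * Real.exp (-(1/4) * z ^ 2)) :=
          mul_le_mul_of_nonneg_left hexp5 (by positivity)
      _ = ((abs a) + (abs b)) * Real.exp (((abs d) + 1) ^ 2) * Real.exp (-(1/4) * z ^ 2) := by ring

theorem stmt3 (P : Measure ℝ) [IsProbabilityMeasure P]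
    (K : ℝ) (hK : ∀ᵐ x ∂P, |x| ≤ K)
    (ψbar : ℝ → ℝ → ℝ)
    (hψbar : ∀ r s : ℝ, ψbar r s =
      ∫ xs, ∫ z, Real.log (∫ x,
          Real.exp (Real.sqrt r * z * x + s * x * xs - r / 2 * x ^ 2) ∂P)
        ∂(gaussianReal 0 1) ∂P) :
    ∀ r : ℝ, 0 ≤ r → ψbar r (-r) ≤ ψbar r r := by
  intro r hr
  have hψrr := hψbar r r
  have hψmr := hψbar r (-r)
  haveI : (MeasureTheory.ae P).NeBot := ae_neBot.2 (IsProbabilityMeasure.ne_zero P)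
  obtain ⟨x₀, hx₀⟩ := hK.exists
  have hK0 : 0 ≤ K := (abs_nonneg x₀).trans hx₀
  set c := Real.sqrt r with hc
  have hc0 : 0 ≤ c := Real.sqrt_nonneg r
  have hcc : c * c = r := Real.mul_self_sqrt hr
  set Z : ℝ → ℝ := fun y => ∫ x, Real.exp (c * y * x - r / 2 * x ^ 2) ∂P with hZ
  have hZm : Measurable Z := by
    have hcont : Continuous fun p : ℝ × ℝ => Real.exp (c * p.1 * p.2 - r / 2 * p.2 ^ 2) := by
      fun_prop
    exact hcont.stronglyMeasurable.integral_prod_right'.measurable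
  -- pointwise exponent bound
  have expo_ub : ∀ y x : ℝ, |x| ≤ K →
      Real.exp (c * y * x - r / 2 * x ^ 2) ≤ Real.exp (c * K * |y|) := by
    intro y x hx
    refine Real.exp_le_exp.2 ?_
    have h1 : c * y * x ≤ c * (|y| * K) := by
      calc c * y * x ≤ |c * y * x| := le_abs_self _
        _ = c * (|y| * |x|) := by rw [abs_mul, abs_mul, abs_of_nonneg hc0, mul_assoc]
        _ ≤ c * (|y| * K) :=
          mul_le_mul_of_nonneg_left (mul_le_mul_of_nonneg_left hx (abs_nonneg y)) hc0
    nlinarith [sq_nonneg x, hr]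
  have key_ub : ∀ y : ℝ, ∀ᵐ x ∂P,
      Real.exp (c * y * x - r / 2 * x ^ 2) ≤ Real.exp (c * K * |y|) := by
    intro y; filter_upwards [hK] with x hx; exact expo_ub y x hx
  have key_lb : ∀ y : ℝ, ∀ᵐ x ∂P,
      Real.exp (-(c * K * |y|) - r / 2 * K ^ 2) ≤ Real.exp (c * y * x - r / 2 * x ^ 2) := by
    intro y
    filter_upwards [hK] with x hx
    refine Real.exp_le_exp.2 ?_
    have h1 : -(c * (|y| * K)) ≤ c * y * x := by
      calc -(c * (|y| * K))
          ≤ -(c * (|y| * |x|)) := by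
            exact neg_le_neg
              (mul_le_mul_of_nonneg_left (mul_le_mul_of_nonneg_left hx (abs_nonneg y)) hc0)
        _ = -|c * y * x| := by rw [abs_mul, abs_mul, abs_of_nonneg hc0, mul_assoc]
        _ ≤ c * y * x := neg_abs_le _
    have h2 : x ^ 2 ≤ K ^ 2 := by nlinarith [sq_abs x, abs_nonneg x]
    nlinarith [hr, h2]
  have hZint : ∀ y : ℝ, Integrable (fun x => Real.exp (c * y * x - r / 2 * x ^ 2)) P := by
    intro y
    refine (integrable_const (Real.exp (c * K * |y|))).mono' ?_ ?_
    · exact (Real.continuous_exp.comp (by fun_prop)).aestronglyMeasurable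
    · filter_upwards [key_ub y] with x hx
      rwa [Real.norm_eq_abs, Real.abs_exp]
  have hZub : ∀ y : ℝ, Z y ≤ Real.exp (c * K * |y|) := by
    intro y
    calc Z y ≤ ∫ _, Real.exp (c * K * |y|) ∂P :=
          integral_mono_ae (hZint y) (integrable_const _) (key_ub y)
      _ = Real.exp (c * K * |y|) := by simp
  have hZlb : ∀ y : ℝ, Real.exp (-(c * K * |y|) - r / 2 * K ^ 2) ≤ Z y := by
    intro y
    calc Real.exp (-(c * K * |y|) - r / 2 * K ^ 2)
        = ∫ _, Real.exp (-(c * K * |y|) - r / 2 * K ^ 2) ∂P := by simp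
      _ ≤ Z y := integral_mono_ae (integrable_const _) (hZint y) (key_lb y)
  have hZpos : ∀ y : ℝ, 0 < Z y := fun y => lt_of_lt_of_le (Real.exp_pos _) (hZlb y)
  set h : ℝ → ℝ := fun y => Real.log (Z y) with hh
  have hhm : Measurable h := Real.measurable_log.comp hZm
  have hhb : ∀ y : ℝ, |h y| ≤ c * K * |y| + r / 2 * K ^ 2 := by
    intro y
    rw [abs_le]
    constructor
    · have h1 := Real.log_le_log (Real.exp_pos (-(c * K * |y|) - r / 2 * K ^ 2)) (hZlb y)
      rw [Real.log_exp] at h1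
      have : h y = Real.log (Z y) := rfl
      linarith [this ▸ h1]
    · have h1 := Real.log_le_log (hZpos y) (hZub y)
      rw [Real.log_exp] at h1
      have hnn : (0:ℝ) ≤ r / 2 * K ^ 2 := by positivity
      have : h y = Real.log (Z y) := rfl
      linarith [this ▸ h1]
  -- rewrite the inner integrals
  have inner_r : ∀ xs z : ℝ,
      Real.log (∫ x, Real.exp (c * z * x + r * x * xs - r / 2 * x ^ 2) ∂P)
        = h (z + c * xs) := by
    intro xs z
    have heq : (fun x => Real.exp (c * z * x + r * x * xs - r / 2 * x ^ 2))
        = fun x => Real.exp (c * (z + c * xs) * x - r / 2 * x ^ 2) := by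
      funext x
      congr 1
      rw [← hcc]
      ring
    rw [heq]
  have inner_mr : ∀ xs z : ℝ,
      Real.log (∫ x, Real.exp (c * z * x + -r * x * xs - r / 2 * x ^ 2) ∂P)
        = h (z + -(c * xs)) := by
    intro xs z
    have heq : (fun x => Real.exp (c * z * x + -r * x * xs - r / 2 * x ^ 2))
        = fun x => Real.exp (c * (z + -(c * xs)) * x - r / 2 * x ^ 2) := by
      funext x
      congr 1
      rw [← hcc]
      ring
    rw [heq]
  have e_rr : ψbar r r
      = ∫ xs, ∫ z, h z * Real.exp (c * z * xs - r / 2 * xs ^ 2) ∂(gaussianReal 0 1) ∂P := by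
    rw [hψrr]
    refine integral_congr_ae (Filter.Eventually.of_forall fun xs => ?_)
    beta_reduce
    have step1 : ∫ z, Real.log (∫ x,
          Real.exp (c * z * x + r * x * xs - r / 2 * x ^ 2) ∂P) ∂(gaussianReal 0 1)
        = ∫ z, h (z + c * xs) ∂(gaussianReal 0 1) :=
      integral_congr_ae (Filter.Eventually.of_forall fun z => inner_r xs z)
    rw [step1, gauss_tilt h (c * xs)]
    refine integral_congr_ae (Filter.Eventually.of_forall fun z => ?_)
    beta_reduce
    have : c * xs * z - (c * xs) ^ 2 / 2 = c * z * xs - r / 2 * xs ^ 2 := by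
      rw [← hcc]; ring
    rw [this]
  have e_mr : ψbar r (-r)
      = ∫ xs, ∫ z, h z * Real.exp (c * (-z) * xs - r / 2 * xs ^ 2) ∂(gaussianReal 0 1) ∂P := by
    rw [hψmr]
    refine integral_congr_ae (Filter.Eventually.of_forall fun xs => ?_)
    beta_reduce
    have step1 : ∫ z, Real.log (∫ x,
          Real.exp (c * z * x + -r * x * xs - r / 2 * x ^ 2) ∂P) ∂(gaussianReal 0 1)
        = ∫ z, h (z + -(c * xs)) ∂(gaussianReal 0 1) :=
      integral_congr_ae (Filter.Eventually.of_forall fun z => inner_mr xs z)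
    rw [step1, gauss_tilt h (-(c * xs))]
    refine integral_congr_ae (Filter.Eventually.of_forall fun z => ?_)
    beta_reduce
    have : -(c * xs) * z - (-(c * xs)) ^ 2 / 2 = c * (-z) * xs - r / 2 * xs ^ 2 := by
      rw [← hcc]; ring
    rw [this]
  -- product measure facts
  have prodae : ∀ᵐ p ∂(P.prod (gaussianReal 0 1)), |p.1| ≤ K := by
    have hmap : (P.prod (gaussianReal 0 1)).map Prod.fst = P := by
      rw [Measure.map_fst_prod]; simp
    exact ae_of_ae_map measurable_fst.aemeasurable (hmap ▸ hK)
  have hgint : Integrable (fun z => (c * K * |z| + r / 2 * K ^ 2) * Real.exp (c * K * |z|))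
      (gaussianReal 0 1) := gauss_integrable_bound (c * K) (r / 2 * K ^ 2) (c * K)
  have hgprod : Integrable
      (fun p : ℝ × ℝ => (c * K * |p.2| + r / 2 * K ^ 2) * Real.exp (c * K * |p.2|))
      (P.prod (gaussianReal 0 1)) := by
    have hmap2 : (P.prod (gaussianReal 0 1)).map Prod.snd = gaussianReal 0 1 := by
      rw [Measure.map_snd_prod]; simp
    have hgm : AEStronglyMeasurable
        (fun z => (c * K * |z| + r / 2 * K ^ 2) * Real.exp (c * K * |z|))
        ((P.prod (gaussianReal 0 1)).map Prod.snd) := by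
      rw [hmap2]; exact hgint.aestronglyMeasurable
    have hgi : Integrable
        (fun z => (c * K * |z| + r / 2 * K ^ 2) * Real.exp (c * K * |z|))
        ((P.prod (gaussianReal 0 1)).map Prod.snd) := by
      rw [hmap2]; exact hgint
    exact (integrable_map_measure hgm measurable_snd.aemeasurable).1 hgi
  have hG₁int : Integrable
      (fun p : ℝ × ℝ => h p.2 * Real.exp (c * p.2 * p.1 - r / 2 * p.1 ^ 2))
      (P.prod (gaussianReal 0 1)) := by
    refine hgprod.mono' ?_ ?_
    · exact ((hhm.comp measurable_snd).mul (Real.measurable_exp.comp (by fun_prop))).aestronglyMeasurable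
    · filter_upwards [prodae] with p hp
      rw [norm_mul, Real.norm_eq_abs, Real.norm_eq_abs, Real.abs_exp]
      exact mul_le_mul (hhb p.2) (expo_ub p.2 p.1 hp) (Real.exp_pos _).le (by positivity)
  have hG₂int : Integrable
      (fun p : ℝ × ℝ => h p.2 * Real.exp (c * (-p.2) * p.1 - r / 2 * p.1 ^ 2))
      (P.prod (gaussianReal 0 1)) := by
    refine hgprod.mono' ?_ ?_
    · exact ((hhm.comp measurable_snd).mul (Real.measurable_exp.comp (by fun_prop))).aestronglyMeasurable
    · filter_upwards [prodae] with p hp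
      rw [norm_mul, Real.norm_eq_abs, Real.norm_eq_abs, Real.abs_exp]
      have := expo_ub (-p.2) p.1 hp
      rw [abs_neg] at this
      exact mul_le_mul (hhb p.2) this (Real.exp_pos _).le (by positivity)
  -- Fubini and identification of inner integrals
  have E₁ : ψbar r r = ∫ z, h z * Z z ∂(gaussianReal 0 1) := by
    rw [e_rr]
    rw [integral_integral_swap
      (f := fun xs z => h z * Real.exp (c * z * xs - r / 2 * xs ^ 2)) hG₁int]
    refine integral_congr_ae (Filter.Eventually.of_forall fun z => ?_)
    beta_reduce
    rw [MeasureTheory.integral_const_mul]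
  have E₂ : ψbar r (-r) = ∫ z, h z * Z (-z) ∂(gaussianReal 0 1) := by
    rw [e_mr]
    rw [integral_integral_swap
      (f := fun xs z => h z * Real.exp (c * (-z) * xs - r / 2 * xs ^ 2)) hG₂int]
    refine integral_congr_ae (Filter.Eventually.of_forall fun z => ?_)
    beta_reduce
    rw [MeasureTheory.integral_const_mul]
  -- integrability of the four functions
  have j₁ : Integrable (fun z => h z * Z z) (gaussianReal 0 1) := by
    refine hgint.mono' ((hhm.mul hZm).aestronglyMeasurable) ?_
    refine Filter.Eventually.of_forall fun z => ?_
    rw [norm_mul, Real.norm_eq_abs, Real.norm_eq_abs]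
    have h1 : |Z z| ≤ Real.exp (c * K * |z|) := by
      rw [abs_of_pos (hZpos z)]; exact hZub z
    exact mul_le_mul (hhb z) h1 (abs_nonneg _) (by positivity)
  have j₂ : Integrable (fun z => h z * Z (-z)) (gaussianReal 0 1) := by
    refine hgint.mono' ((hhm.mul (hZm.comp measurable_neg)).aestronglyMeasurable) ?_
    refine Filter.Eventually.of_forall fun z => ?_
    rw [norm_mul, Real.norm_eq_abs, Real.norm_eq_abs]
    have h1 : |Z (-z)| ≤ Real.exp (c * K * |z|) := by
      rw [abs_of_pos (hZpos (-z))]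
      have := hZub (-z); rwa [abs_neg] at this
    exact mul_le_mul (hhb z) h1 (abs_nonneg _) (by positivity)
  have j₃ : Integrable (fun z => h (-z) * Z z) (gaussianReal 0 1) := by
    refine hgint.mono' (((hhm.comp measurable_neg).mul hZm).aestronglyMeasurable) ?_
    refine Filter.Eventually.of_forall fun z => ?_
    rw [norm_mul, Real.norm_eq_abs, Real.norm_eq_abs]
    have h0 := hhb (-z); rw [abs_neg] at h0
    have h1 : |Z z| ≤ Real.exp (c * K * |z|) := by
      rw [abs_of_pos (hZpos z)]; exact hZub z
    exact mul_le_mul h0 h1 (abs_nonneg _) (by positivity)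
  have j₄ : Integrable (fun z => h (-z) * Z (-z)) (gaussianReal 0 1) := by
    refine hgint.mono' (((hhm.comp measurable_neg).mul (hZm.comp measurable_neg)).aestronglyMeasurable) ?_
    refine Filter.Eventually.of_forall fun z => ?_
    rw [norm_mul, Real.norm_eq_abs, Real.norm_eq_abs]
    have h0 := hhb (-z); rw [abs_neg] at h0
    have h1 : |Z (-z)| ≤ Real.exp (c * K * |z|) := by
      rw [abs_of_pos (hZpos (-z))]
      have := hZub (-z); rwa [abs_neg] at this
    exact mul_le_mul h0 h1 (abs_nonneg _) (by positivity)
  -- symmetry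
  have s₁ : ∫ z, h (-z) * Z (-z) ∂(gaussianReal 0 1) = ∫ z, h z * Z z ∂(gaussianReal 0 1) :=
    gauss_sym (fun z => h z * Z z)
  have s₂ : ∫ z, h (-z) * Z z ∂(gaussianReal 0 1) = ∫ z, h z * Z (-z) ∂(gaussianReal 0 1) := by
    have hsym := gauss_sym (fun z => h z * Z (-z))
    simp only [neg_neg] at hsym
    exact hsym
  -- pointwise positivity
  have key : 0 ≤ ∫ z, (h z - h (-z)) * (Z z - Z (-z)) ∂(gaussianReal 0 1) := by
    refine integral_nonneg fun z => ?_
    show (0:ℝ) ≤ (h z - h (-z)) * (Z z - Z (-z))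
    rcases le_total (Z (-z)) (Z z) with hle | hle
    · have hlog : h (-z) ≤ h z := Real.log_le_log (hZpos (-z)) hle
      exact mul_nonneg (sub_nonneg.2 hlog) (sub_nonneg.2 hle)
    · have hlog : h z ≤ h (-z) := Real.log_le_log (hZpos z) hle
      nlinarith [sub_nonpos.2 hlog, sub_nonpos.2 hle]
  have expand : ∫ z, (h z - h (-z)) * (Z z - Z (-z)) ∂(gaussianReal 0 1)
      = (∫ z, h z * Z z ∂(gaussianReal 0 1) - ∫ z, h z * Z (-z) ∂(gaussianReal 0 1))
        + (∫ z, h (-z) * Z (-z) ∂(gaussianReal 0 1)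
            - ∫ z, h (-z) * Z z ∂(gaussianReal 0 1)) := by
    have jA : Integrable (fun z => h z * Z z - h z * Z (-z)) (gaussianReal 0 1) := j₁.sub j₂
    have jB : Integrable (fun z => h (-z) * Z (-z) - h (-z) * Z z) (gaussianReal 0 1) := j₄.sub j₃
    have step : (fun z => (h z - h (-z)) * (Z z - Z (-z)))
        = fun z => (h z * Z z - h z * Z (-z)) + (h (-z) * Z (-z) - h (-z) * Z z) :=
      funext fun z => by ring
    rw [step, integral_add jA jB, integral_sub j₁ j₂, integral_sub j₄ j₃]
  rw [E₁, E₂]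
  rw [expand, s₁, s₂] at key
  linarith
end

section
/- Fix $s \in \mathbb{R}$ and $c \in \mathbb{C}$, and suppose $\phi_N : [0, \lambda_0] \to \mathbb{C}$ is differentiable with $\phi_N(0) = 1$, $|\phi_N(\lambda)| \le 1$, and $|\phi_N'(\lambda) - c\,\tfrac{\lambda}{1-\lambda}\,\phi_N(\lambda)| \le K/\sqrt{N}$ for all $\lambda \in [0,\lambda_0]$, where $\lambda_0 < 1$ and $K < \infty$. Then for all $\lambda \in [0, \lambda_0]$, $|\phi_N(\lambda) - \exp(c\,(-\lambda - \log(1-\lambda)))| \le K' / \sqrt{N}$ for a constant $K' = K'(\lambda_0, c, K)$ independent of $N$. -/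
/-!
Integrating factor: with `F λ = c (-λ - log (1 - λ))`, so that `F' = c λ / (1 - λ)` and
`F 0 = 0`, the function `ψ = φ e^{-F}` has derivative `(φ' - F' φ) e^{-F}`, of size `O(K / √N)` on
`[0, λ₀]`. The mean value inequality gives `|ψ λ - 1| = O(K / √N)`, and
`φ - e^F = (ψ - 1) e^F`; the factors `e^{±F}` are bounded on `[0, λ₀]` since `λ₀ < 1`.
-/

open Complex Set

theorem norm_sub_mul_exp_le_of_norm_deriv_sub_mul_le {f f' F F' : ℝ → ℂ} {a b ε M : ℝ}
    (hf : ∀ t ∈ Icc a b, HasDerivAt f (f' t) t) (hF : ∀ t ∈ Icc a b, HasDerivAt F (F' t) t)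
    (hFa : F a = 0) (hexp : ∀ t ∈ Icc a b, ‖exp (F t)‖ ≤ M)
    (hexp_neg : ∀ t ∈ Icc a b, ‖exp (-F t)‖ ≤ M)
    (hε : ∀ t ∈ Icc a b, ‖f' t - F' t * f t‖ ≤ ε) :
    ∀ t ∈ Icc a b, ‖f t - f a * exp (F t)‖ ≤ ε * M * (t - a) * M := by
  set ψ : ℝ → ℂ := fun t => f t * exp (-F t)
  have hψ : ∀ t ∈ Icc a b,
      HasDerivWithinAt ψ ((f' t - F' t * f t) * exp (-F t)) (Icc a b) t := fun t ht =>
    ((hf t ht).mul (hF t ht).neg.cexp).hasDerivWithinAt.congr_deriv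
      (by simp only [Pi.neg_apply]; ring)
  have hψ_bound : ∀ t ∈ Ico a b, ‖(f' t - F' t * f t) * exp (-F t)‖ ≤ ε * M := fun t ht => by
    rw [norm_mul]
    have ht' := Ico_subset_Icc_self ht
    exact mul_le_mul (hε t ht') (hexp_neg t ht') (norm_nonneg _) ((norm_nonneg _).trans (hε t ht'))
  intro t ht
  have hψ_sub := norm_image_sub_le_of_norm_deriv_le_segment' hψ hψ_bound t ht
  have hfactor : f t - f a * exp (F t) = (ψ t - ψ a) * exp (F t) := by
    simp only [ψ, hFa, neg_zero, exp_zero, mul_one, sub_mul, mul_assoc, ← exp_add,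
      neg_add_cancel]
  rw [hfactor, norm_mul]
  exact mul_le_mul hψ_sub (hexp t ht) (norm_nonneg _) ((norm_nonneg _).trans hψ_sub)

theorem hasDerivAt_neg_sub_log_one_sub {z : ℂ} (hz : 1 - z ∈ slitPlane) :
    HasDerivAt (fun w => -w - log (1 - w)) (z / (1 - z)) z := by
  have hlog := (hasDerivAt_log hz).comp z ((hasDerivAt_id z).const_sub 1)
  refine ((hasDerivAt_id' z).neg.sub hlog).congr_deriv ?_
  field_simp [slitPlane_ne_zero hz]
  ring

theorem hasDerivAt_ofReal_neg_sub_log_one_sub {t : ℝ} (ht : t < 1) :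
    HasDerivAt (fun s : ℝ => -(s : ℂ) - log (1 - s)) (t / (1 - t)) t :=
  (hasDerivAt_neg_sub_log_one_sub (z := t) (Or.inl (by simpa using ht))).comp_ofReal

theorem norm_neg_sub_log_one_sub_le {t T : ℝ} (ht : t ∈ Icc 0 T) (hT : T < 1) :
    ‖-(t : ℂ) - log (1 - t)‖ ≤ T - Real.log (1 - T) := by
  obtain ⟨ht0, htT⟩ := ht
  have hlog : log (1 - t) = Real.log (1 - t) := by
    rw [← ofReal_one, ← ofReal_sub, ofReal_log (by linarith)]
  have hlog_nonpos : Real.log (1 - t) ≤ 0 := Real.log_nonpos (by linarith) (by linarith)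
  have hlog_mono : Real.log (1 - T) ≤ Real.log (1 - t) :=
    Real.log_le_log (by linarith) (by linarith)
  rw [hlog, ← ofReal_neg, ← ofReal_sub, norm_real, Real.norm_eq_abs, abs_le]
  constructor <;> linarith

theorem norm_exp_mul_le {c w : ℂ} {B : ℝ} (hw : ‖w‖ ≤ B) :
    ‖exp (c * w)‖ ≤ Real.exp (‖c‖ * B) := by
  refine (norm_exp_le_exp_norm _).trans (Real.exp_le_exp.2 ?_)
  rw [norm_mul]
  exact mul_le_mul_of_nonneg_left hw (norm_nonneg c)

theorem stmt7 (lam0 : ℝ) (hlam0 : 0 < lam0 ∧ lam0 < 1) (c : ℂ) (K : ℝ) (hK : 0 ≤ K) :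
    ∃ K' : ℝ, ∀ (N : ℕ), 1 ≤ N → ∀ (φ φ' : ℝ → ℂ),
      (∀ lam ∈ Set.Icc (0 : ℝ) lam0, HasDerivAt φ (φ' lam) lam) →
      φ 0 = 1 →
      (∀ lam ∈ Set.Icc (0 : ℝ) lam0, ‖φ lam‖ ≤ 1) →
      (∀ lam ∈ Set.Icc (0 : ℝ) lam0,
        ‖φ' lam - c * ((lam : ℂ) / (1 - (lam : ℂ))) * φ lam‖ ≤ K / Real.sqrt N) →
      ∀ lam ∈ Set.Icc (0 : ℝ) lam0,
        ‖φ lam - Complex.exp (c * (-(lam : ℂ) - Complex.log (1 - (lam : ℂ))))‖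
          ≤ K' / Real.sqrt N := by
  set F : ℝ → ℂ := fun t => c * (-(t : ℂ) - log (1 - t))
  set M := Real.exp (‖c‖ * (lam0 - Real.log (1 - lam0)))
  have hF : ∀ t ∈ Icc 0 lam0, HasDerivAt F (c * (t / (1 - t))) t := fun t ht =>
    (hasDerivAt_ofReal_neg_sub_log_one_sub (by linarith [ht.2])).const_mul c
  have hexp : ∀ t ∈ Icc 0 lam0, ‖exp (F t)‖ ≤ M := fun t ht =>
    norm_exp_mul_le (norm_neg_sub_log_one_sub_le ht hlam0.2)
  have hexp_neg : ∀ t ∈ Icc 0 lam0, ‖exp (-F t)‖ ≤ M := fun t ht => by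
    rw [← neg_mul]
    exact (norm_exp_mul_le (norm_neg_sub_log_one_sub_le ht hlam0.2)).trans_eq (by rw [norm_neg])
  refine ⟨K * M * lam0 * M, fun N _ φ φ' hφ hφ0 _ hODE lam hlam => ?_⟩
  have hbound := norm_sub_mul_exp_le_of_norm_deriv_sub_mul_le hφ hF (by simp [F]) hexp hexp_neg
    hODE lam hlam
  rw [hφ0, one_mul, sub_zero] at hbound
  calc _ ≤ K / Real.sqrt N * M * lam * M := hbound
    _ ≤ K / Real.sqrt N * M * lam0 * M := by gcongr; exact hlam.2
    _ = K * M * lam0 * M / Real.sqrt N := by ring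
end
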